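/- arXiv:2202.10296 — 2 statements merged into one kernel-verified Lean document; each statement's English description precedes it below -/
import Mathlib

section
/- For a nonnegative integer-valued random variable X and α ∈ [0,1], ρ(α∘X) = α·ρ(X), where ρ(X) = inf{β ∈ [0,1] : X ∈ M_β}. -/
/-!
Thinning composes multiplicatively, `α ∘ (β ∘ Z) = (α β) ∘ Z`, so every `β` with `X ∈ M_β` gives
`α ∘ X ∈ M_{α β}`, whence `ρ(α ∘ X) ≤ α ρ(X)`. Conversely, if `α ∘ X = γ ∘ Z` with `γ < α`, then
`α ∘ X = α ∘ ((γ / α) ∘ Z)`, and thinning by `α > 0` is injective: the generating function of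
`α ∘ X` is `s ↦ G_X(α s + 1 - α)`, which determines `G_X` on `[1 - α, 1]`, hence on the unit disc
by analytic continuation, hence the law of `X`. So `X ∈ M_{γ/α}` and `α ρ(X) ≤ γ`; parameters
`γ ≥ α` are harmless since `ρ(X) ≤ 1`.
-/

open scoped BigOperators

/-- `IsPMF p` : `p` is a probability mass function on `ℕ`. -/
def IsPMF (p : ℕ → ℝ) : Prop :=
  (∀ n, 0 ≤ p n) ∧ HasSum p 1

/-- Binomial `α`-thinning at the level of distributions:
`thin α p k = P(α ∘ X = k)` when `X` has pmf `p`. -/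
noncomputable def thin (α : ℝ) (p : ℕ → ℝ) (k : ℕ) : ℝ :=
  ∑' n : ℕ, (n.choose k : ℝ) * α ^ k * (1 - α) ^ (n - k) * p n

/-- Convolution of two pmfs on `ℕ` (law of the sum of independent variables). -/
noncomputable def conv (p q : ℕ → ℝ) (n : ℕ) : ℝ :=
  ∑ k ∈ Finset.range (n + 1), p k * q (n - k)

/-- `MemM α p` : the distribution `p` is an `α`-thinned distribution, i.e. `p ∈ M_α`. -/
def MemM (α : ℝ) (p : ℕ → ℝ) : Prop :=
  ∃ q : ℕ → ℝ, IsPMF q ∧ ∀ k, p k = thin α q k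

/-- `rho p` : the minimal thinning parameter `ρ(X)`. -/
noncomputable def rho (p : ℕ → ℝ) : ℝ :=
  sInf {α : ℝ | α ∈ Set.Icc (0:ℝ) 1 ∧ MemM α p}

open scoped ENNReal
open Set Topology Pointwise

/-- Thinning in `ℝ≥0∞`, where all interchanges of summation are unconditional. -/
noncomputable def ethin (a : ℝ≥0∞) (P : ℕ → ℝ≥0∞) (k : ℕ) : ℝ≥0∞ :=
  ∑' n : ℕ, (n.choose k : ℝ≥0∞) * a ^ k * (1 - a) ^ (n - k) * P n

namespace ENNReal

theorem tsum_choose_mul_pow (x y : ℝ≥0∞) (n : ℕ) :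
    ∑' k : ℕ, (n.choose k : ℝ≥0∞) * x ^ k * y ^ (n - k) = (x + y) ^ n := by
  rw [tsum_eq_sum (s := Finset.range (n + 1)), add_pow]
  · exact Finset.sum_congr rfl fun k _ => by ring
  · intro k hk
    simp [Nat.choose_eq_zero_of_lt (by simpa using hk : n < k)]

theorem tsum_choose_mul_choose_mul_pow (x y u v : ℝ≥0∞) (n k : ℕ) :
    ∑' m : ℕ, (m.choose k : ℝ≥0∞) * (n.choose m) * x ^ k * y ^ (m - k) * u ^ m * v ^ (n - m)
      = n.choose k * (x * u) ^ k * (y * u + v) ^ (n - k) := by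
  rw [← ENNReal.summable.sum_add_tsum_nat_add' (k := k),
    Finset.sum_eq_zero fun m hm => by
      simp [Nat.choose_eq_zero_of_lt (Finset.mem_range.mp hm)],
    zero_add, ← tsum_choose_mul_pow, ← ENNReal.tsum_mul_left]
  refine tsum_congr fun j => ?_
  have hchoose : (n.choose (j + k) : ℝ≥0∞) * (j + k).choose k = n.choose k * (n - k).choose j := by
    exact_mod_cast (Nat.choose_mul (Nat.le_add_left k j)).trans (by rw [Nat.add_sub_cancel])
  rw [Nat.add_sub_cancel, show n - (j + k) = n - k - j by omega, mul_comm ((j + k).choose k : ℝ≥0∞),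
    mul_pow, mul_pow, pow_add]
  calc _ = ((n.choose (j + k) : ℝ≥0∞) * (j + k).choose k) * (x ^ k * u ^ k)
        * (y ^ j * u ^ j * v ^ (n - k - j)) := by ring
    _ = _ := by rw [hchoose]; ring

theorem tsum_ethin_mul_pow (a t : ℝ≥0∞) (P : ℕ → ℝ≥0∞) :
    ∑' k, ethin a P k * t ^ k = ∑' n, P n * (a * t + (1 - a)) ^ n := by
  simp_rw [ethin, ← ENNReal.tsum_mul_right]
  rw [ENNReal.tsum_comm]
  refine tsum_congr fun n => ?_
  rw [← tsum_choose_mul_pow, ← ENNReal.tsum_mul_left]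
  exact tsum_congr fun k => by ring

theorem tsum_ethin {a : ℝ≥0∞} (ha : a ≤ 1) (P : ℕ → ℝ≥0∞) :
    ∑' k, ethin a P k = ∑' n, P n := by
  simpa [add_tsub_cancel_of_le ha] using tsum_ethin_mul_pow a 1 P

theorem ethin_ethin {a b : ℝ≥0∞} (ha : a ≤ 1) (hb : b ≤ 1) (P : ℕ → ℝ≥0∞) :
    ethin a (ethin b P) = ethin (a * b) P := by
  have hcompl : (1 - a) * b + (1 - b) = 1 - a * b := by
    refine ENNReal.eq_sub_of_add_eq (mul_ne_top (ha.trans_lt one_lt_top).ne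
      (hb.trans_lt one_lt_top).ne) ?_
    rw [add_right_comm, ← add_mul, tsub_add_cancel_of_le ha, one_mul, add_tsub_cancel_of_le hb]
  funext k
  simp_rw [ethin, ← ENNReal.tsum_mul_left]
  rw [ENNReal.tsum_comm]
  refine tsum_congr fun n => ?_
  rw [← hcompl, ← tsum_choose_mul_choose_mul_pow, ← ENNReal.tsum_mul_right]
  exact tsum_congr fun m => by ring

end ENNReal

theorem ofReal_thin_term {α : ℝ} (hα : α ∈ Icc (0 : ℝ) 1) (x : ℝ) (n k : ℕ) :
    ENNReal.ofReal ((n.choose k : ℝ) * α ^ k * (1 - α) ^ (n - k) * x)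
      = (n.choose k : ℝ≥0∞) * ENNReal.ofReal α ^ k * (1 - ENNReal.ofReal α) ^ (n - k)
        * ENNReal.ofReal x := by
  have h1α : 0 ≤ 1 - α := sub_nonneg.2 hα.2
  have := hα.1
  rw [ENNReal.ofReal_mul (by positivity), ENNReal.ofReal_mul (by positivity),
    ENNReal.ofReal_mul (by positivity), ENNReal.ofReal_natCast, ENNReal.ofReal_pow hα.1,
    ENNReal.ofReal_pow h1α, ENNReal.ofReal_sub _ hα.1, ENNReal.ofReal_one]

theorem thin_eq_toReal_ethin {α : ℝ} (hα : α ∈ Icc (0 : ℝ) 1) {p : ℕ → ℝ} (hp : ∀ n, 0 ≤ p n)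
    (k : ℕ) : thin α p k = (ethin (ENNReal.ofReal α) (fun n => ENNReal.ofReal (p n)) k).toReal := by
  simp only [ethin, ← ofReal_thin_term hα]
  rw [ENNReal.tsum_toReal_eq fun _ => ENNReal.ofReal_ne_top]
  refine tsum_congr fun n => (ENNReal.toReal_ofReal ?_).symm
  have := hα.1
  have := sub_nonneg.2 hα.2
  have := hp n
  positivity

theorem IsPMF.tsum_ofReal {p : ℕ → ℝ} (hp : IsPMF p) : ∑' n, ENNReal.ofReal (p n) = 1 := by
  rw [← ENNReal.ofReal_tsum_of_nonneg hp.1 hp.2.summable, hp.2.tsum_eq, ENNReal.ofReal_one]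

theorem isPMF_of_tsum_ofReal {p : ℕ → ℝ} (hp : ∀ n, 0 ≤ p n)
    (h : ∑' n, ENNReal.ofReal (p n) = 1) : IsPMF p := by
  refine ⟨hp, ?_⟩
  have := ENNReal.hasSum_toReal (h.symm ▸ ENNReal.one_ne_top)
  rw [← ENNReal.tsum_toReal_eq fun _ => ENNReal.ofReal_ne_top, h] at this
  simpa [ENNReal.toReal_ofReal (hp _)] using this

theorem ofReal_thin {α : ℝ} (hα : α ∈ Icc (0 : ℝ) 1) {p : ℕ → ℝ} (hp : IsPMF p) (k : ℕ) :
    ENNReal.ofReal (thin α p k) = ethin (ENNReal.ofReal α) (fun n => ENNReal.ofReal (p n)) k := by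
  have hle : ethin (ENNReal.ofReal α) (fun n => ENNReal.ofReal (p n)) k ≤ 1 := by
    calc _ ≤ ∑' k, ethin (ENNReal.ofReal α) (fun n => ENNReal.ofReal (p n)) k := ENNReal.le_tsum k
      _ = 1 := by rw [ENNReal.tsum_ethin (ENNReal.ofReal_le_one.2 hα.2)]; exact hp.tsum_ofReal
  rw [thin_eq_toReal_ethin hα hp.1,
    ENNReal.ofReal_toReal (hle.trans_lt ENNReal.one_lt_top).ne]

theorem IsPMF.thin {α : ℝ} (hα : α ∈ Icc (0 : ℝ) 1) {p : ℕ → ℝ} (hp : IsPMF p) :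
    IsPMF (thin α p) := by
  refine isPMF_of_tsum_ofReal (fun k => thin_eq_toReal_ethin hα hp.1 k ▸ ENNReal.toReal_nonneg) ?_
  simp_rw [ofReal_thin hα hp]
  rw [ENNReal.tsum_ethin (ENNReal.ofReal_le_one.2 hα.2), hp.tsum_ofReal]

theorem thin_thin {α β : ℝ} (hα : α ∈ Icc (0 : ℝ) 1) (hβ : β ∈ Icc (0 : ℝ) 1) {p : ℕ → ℝ}
    (hp : IsPMF p) : thin α (thin β p) = thin (α * β) p := by
  funext k
  rw [thin_eq_toReal_ethin hα (hp.thin hβ).1, funext (ofReal_thin hβ hp),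
    ENNReal.ethin_ethin (ENNReal.ofReal_le_one.2 hα.2) (ENNReal.ofReal_le_one.2 hβ.2),
    ← ENNReal.ofReal_mul hα.1,
    thin_eq_toReal_ethin (unitInterval.mul_mem hα hβ) hp.1]

theorem thin_one (p : ℕ → ℝ) : thin 1 p = p := by
  funext k
  rw [thin, tsum_eq_single k fun n hn => ?_]
  · simp
  · rcases hn.lt_or_gt with h | h
    · simp [Nat.choose_eq_zero_of_lt h]
    · simp [Nat.sub_ne_zero_of_lt h]

theorem tsum_eq_toReal_tsum_ofReal {f : ℕ → ℝ} (hf : ∀ n, 0 ≤ f n) :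
    ∑' n, f n = (∑' n, ENNReal.ofReal (f n)).toReal := by
  rw [ENNReal.tsum_toReal_eq fun _ => ENNReal.ofReal_ne_top]
  exact tsum_congr fun n => (ENNReal.toReal_ofReal (hf n)).symm

theorem IsPMF.le_one {p : ℕ → ℝ} (hp : IsPMF p) (n : ℕ) : p n ≤ 1 :=
  le_hasSum hp.2 n fun j _ => hp.1 j

open FormalMultilinearSeries

theorem IsPMF.one_le_radius {p : ℕ → ℝ} (hp : IsPMF p) : 1 ≤ (ofScalars ℝ p).radius := by
  refine ENNReal.coe_one ▸ (ofScalars ℝ p).le_radius_of_bound 1 fun n => ?_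
  rw [ofScalars_norm, Real.norm_of_nonneg (hp.1 n), NNReal.coe_one, one_pow, mul_one]
  exact hp.le_one n

theorem ofScalarsSum_thin {α : ℝ} (hα : α ∈ Icc (0 : ℝ) 1) {p : ℕ → ℝ} (hp : IsPMF p) {s : ℝ}
    (hs : 0 ≤ s) : ofScalarsSum (thin α p) s = ofScalarsSum p (α * s + (1 - α)) := by
  have h1α : 0 ≤ 1 - α := sub_nonneg.2 hα.2
  have ht : 0 ≤ α * s + (1 - α) := add_nonneg (mul_nonneg hα.1 hs) h1α
  simp only [ofScalarsSum_eq_tsum, smul_eq_mul]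
  rw [tsum_eq_toReal_tsum_ofReal fun k => mul_nonneg ((hp.thin hα).1 k) (pow_nonneg hs k),
    tsum_eq_toReal_tsum_ofReal fun n => mul_nonneg (hp.1 n) (pow_nonneg ht n)]
  simp only [ENNReal.ofReal_mul ((hp.thin hα).1 _), ENNReal.ofReal_mul (hp.1 _),
    ENNReal.ofReal_pow hs, ENNReal.ofReal_pow ht]
  have hcompl : ENNReal.ofReal (α * s + (1 - α))
      = ENNReal.ofReal α * ENNReal.ofReal s + (1 - ENNReal.ofReal α) := by
    rw [ENNReal.ofReal_add (mul_nonneg hα.1 hs) h1α, ENNReal.ofReal_mul hα.1,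
      ENNReal.ofReal_sub _ hα.1, ENNReal.ofReal_one]
  simp_rw [hcompl, ← ENNReal.tsum_ethin_mul_pow, ofReal_thin hα hp]

theorem ofScalars_eq_of_eventuallyEq {c c' : ℕ → ℝ} {r : ℝ≥0∞}
    (hc : r ≤ (ofScalars ℝ c).radius) (hc' : r ≤ (ofScalars ℝ c').radius) {x : ℝ}
    (hx : x ∈ Metric.eball 0 r) (h : ofScalarsSum c =ᶠ[𝓝 x] ofScalarsSum c') : c = c' := by
  have hr := Metric.pos_of_mem_eball hx
  have H : HasFPowerSeriesOnBall (ofScalarsSum c) (ofScalars ℝ c) 0 r :=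
    ((ofScalars ℝ c).hasFPowerSeriesOnBall (hr.trans_le hc)).mono hr hc
  have H' : HasFPowerSeriesOnBall (ofScalarsSum c') (ofScalars ℝ c') 0 r :=
    ((ofScalars ℝ c').hasFPowerSeriesOnBall (hr.trans_le hc')).mono hr hc'
  have hEq : EqOn (ofScalarsSum c) (ofScalarsSum c') (Metric.eball (0 : ℝ) r) :=
    H.analyticOnNhd.eqOn_of_preconnected_of_eventuallyEq H'.analyticOnNhd
      Metric.isPreconnected_eball hx h
  exact ofScalars_series_injective ℝ ℝ
    ((H.congr hEq).hasFPowerSeriesAt.eq_formalMultilinearSeries H'.hasFPowerSeriesAt)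

theorem thin_injective {α : ℝ} (hα0 : 0 < α) (hα1 : α ≤ 1) {p p' : ℕ → ℝ} (hp : IsPMF p)
    (hp' : IsPMF p') (h : thin α p = thin α p') : p = p' := by
  have hx : 1 - α / 2 ∈ Metric.eball (0 : ℝ) 1 := by
    rw [← ENNReal.ofReal_one, Metric.eball_ofReal, Metric.mem_ball, Real.dist_0_eq_abs, abs_lt]
    constructor <;> linarith
  refine ofScalars_eq_of_eventuallyEq hp.one_le_radius hp'.one_le_radius hx ?_
  filter_upwards [Ioo_mem_nhds (by linarith : 1 - α < 1 - α / 2) (by linarith : 1 - α / 2 < 1)]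
    with t ht
  have hs : 0 ≤ (t - (1 - α)) / α := div_nonneg (by linarith [ht.1]) hα0.le
  have hst : α * ((t - (1 - α)) / α) + (1 - α) = t := by field_simp; ring
  rw [← hst, ← ofScalarsSum_thin ⟨hα0.le, hα1⟩ hp hs, ← ofScalarsSum_thin ⟨hα0.le, hα1⟩ hp' hs, h]

theorem IsPMF.memM_one {p : ℕ → ℝ} (hp : IsPMF p) : MemM 1 p :=
  ⟨p, hp, fun k => by rw [thin_one]⟩

theorem MemM.thin_mul {α β : ℝ} (hα : α ∈ Icc (0 : ℝ) 1) (hβ : β ∈ Icc (0 : ℝ) 1) {p : ℕ → ℝ}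
    (h : MemM β p) : MemM (α * β) (thin α p) := by
  obtain ⟨q, hq, he⟩ := h
  exact ⟨q, hq, fun k => by rw [(funext he : p = thin β q), thin_thin hα hβ hq]⟩

theorem MemM.of_thin {α γ : ℝ} (hα0 : 0 < α) (hα1 : α ≤ 1) (hγ0 : 0 ≤ γ) (hγα : γ ≤ α)
    {p : ℕ → ℝ} (hp : IsPMF p) (h : MemM γ (thin α p)) : MemM (γ / α) p := by
  obtain ⟨q, hq, he⟩ := h
  have hδ : γ / α ∈ Icc (0 : ℝ) 1 := unitInterval.div_mem hγ0 hα0.le hγα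
  refine ⟨q, hq, congrFun (thin_injective hα0 hα1 hp (hq.thin hδ) ?_)⟩
  rw [thin_thin ⟨hα0.le, hα1⟩ hδ hq, mul_div_cancel₀ _ hα0.ne']
  exact funext he

theorem rho_nonneg (p : ℕ → ℝ) : 0 ≤ rho p :=
  Real.sInf_nonneg fun _ hβ => hβ.1.1

theorem rho_le {p : ℕ → ℝ} {β : ℝ} (hβ : β ∈ Icc (0 : ℝ) 1) (h : MemM β p) : rho p ≤ β :=
  csInf_le ⟨0, fun _ hγ => hγ.1.1⟩ ⟨hβ, h⟩

theorem le_rho {p : ℕ → ℝ} (hp : IsPMF p) {x : ℝ}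
    (h : ∀ β ∈ Icc (0 : ℝ) 1, MemM β p → x ≤ β) : x ≤ rho p :=
  le_csInf ⟨1, unitInterval.one_mem, hp.memM_one⟩ fun β hβ => h β hβ.1 hβ.2

theorem rho_le_one {p : ℕ → ℝ} (hp : IsPMF p) : rho p ≤ 1 :=
  rho_le unitInterval.one_mem hp.memM_one

theorem rho_thin_le {α : ℝ} (hα : α ∈ Icc (0 : ℝ) 1) {p : ℕ → ℝ} (hp : IsPMF p) :
    rho (thin α p) ≤ α * rho p := by
  have hsub : α • {β | β ∈ Icc (0 : ℝ) 1 ∧ MemM β p}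
      ⊆ {γ | γ ∈ Icc (0 : ℝ) 1 ∧ MemM γ (thin α p)} := by
    rintro _ ⟨β, ⟨hβ, h⟩, rfl⟩
    exact ⟨unitInterval.mul_mem hα hβ, h.thin_mul hα hβ⟩
  calc rho (thin α p) ≤ sInf (α • {β | β ∈ Icc (0 : ℝ) 1 ∧ MemM β p}) :=
        csInf_le_csInf ⟨0, fun _ hγ => hγ.1.1⟩
          ⟨α • 1, smul_mem_smul_set ⟨unitInterval.one_mem, hp.memM_one⟩⟩ hsub
    _ = α * rho p := Real.sInf_smul_of_nonneg hα.1 _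

theorem mul_rho_le_rho_thin {α : ℝ} (hα0 : 0 < α) (hα1 : α ≤ 1) {p : ℕ → ℝ} (hp : IsPMF p) :
    α * rho p ≤ rho (thin α p) := by
  refine le_rho (hp.thin ⟨hα0.le, hα1⟩) fun γ hγ h => ?_
  rcases le_or_gt α γ with hαγ | hγα
  · exact (mul_le_of_le_one_right hα0.le (rho_le_one hp)).trans hαγ
  · calc α * rho p ≤ α * (γ / α) := mul_le_mul_of_nonneg_left (rho_le
          (unitInterval.div_mem hγ.1 hα0.le hγα.le) (h.of_thin hα0 hα1 hγ.1 hγα.le hp)) hα0.le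
      _ = γ := mul_div_cancel₀ _ hα0.ne'

/-- `ρ(α∘X) = α·ρ(X)`. -/
theorem stmt_8 (α : ℝ) (hα : α ∈ Set.Icc (0:ℝ) 1) (p : ℕ → ℝ) (hp : IsPMF p) :
    rho (thin α p) = α * rho p := by
  refine le_antisymm (rho_thin_le hα hp) ?_
  rcases hα.1.eq_or_lt with rfl | hα0
  · simpa using rho_nonneg _
  · exact mul_rho_le_rho_thin hα0 hα.2 hp
end

section
/- Let X have support contained in {0,...,n} with p_n = P(X=n) > 0. Then ρ(X) ≥ p_n^{1/n} > 0, and for α ∈ (0,1], X ∼ α∘Z for some Z supported on {0,...,n} if and only if p_j*(α) := Σ_{k=j}^{n} C(k,j) α^{-k} (α−1)^{k−j} p_k ≥ 0 for all 0 ≤ j ≤ n−1; in that case P(Z=j) = p_j*(α) for 0 ≤ j ≤ n. -/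
open scoped BigOperators

/-! On distributions supported in `{0,…,n}`, `α`-thinning is the triangular linear map with
matrix `thinCoeff α m k = C(m,k) α^k (1-α)^(m-k)`, and by the binomial theorem thinning by `β`
and then by `α` is thinning by `α * β`. The coefficients of `p_j*(α)` are those of
`α⁻¹`-thinning, so `p*(α)` is the unique preimage of `p` under `α`-thinning, it has total mass
one, and its top entry `α^(-n) p_n` is positive: `Z` exists iff the other entries are
nonnegative.

For the bound on `ρ`: if `X ∼ α∘Z` then `α^m P(Z = m) ≤ P(X = m)`, so `Z` also lives on
`{0,…,n}` and `p_n = α^n P(Z = n) ≤ α^n`. -/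

open Finset

noncomputable def thinCoeff (α : ℝ) (m k : ℕ) : ℝ :=
  (m.choose k : ℝ) * α ^ k * (1 - α) ^ (m - k)

noncomputable def thinUpTo (n : ℕ) (α : ℝ) (q : ℕ → ℝ) (k : ℕ) : ℝ :=
  ∑ m ∈ range (n + 1), thinCoeff α m k * q m

section thinCoeff

variable (α β : ℝ)

lemma thinCoeff_of_lt {m k : ℕ} (h : m < k) : thinCoeff α m k = 0 := by
  simp [thinCoeff, Nat.choose_eq_zero_of_lt h]

lemma thinCoeff_self (m : ℕ) : thinCoeff α m m = α ^ m := by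
  simp [thinCoeff]

lemma thinCoeff_one (m k : ℕ) : thinCoeff 1 m k = if m = k then 1 else 0 := by
  rcases lt_trichotomy m k with h | rfl | h
  · simp [thinCoeff_of_lt _ h, h.ne]
  · simp [thinCoeff_self]
  · simp [thinCoeff, h.ne', Nat.sub_ne_zero_of_lt h]

lemma sum_range_thinCoeff {m N : ℕ} (h : m < N) : ∑ k ∈ range N, thinCoeff α m k = 1 := by
  rw [← sum_subset (range_subset_range.2 h) fun k _ hk => thinCoeff_of_lt α (by simpa using hk)]
  simp only [thinCoeff]
  have h := add_pow α (1 - α) m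
  rw [add_sub_cancel, one_pow] at h
  exact (sum_congr rfl fun k _ => by ring).trans h.symm

lemma sum_thinCoeff_mul_thinCoeff {l N : ℕ} (hl : l < N) (k : ℕ) :
    ∑ m ∈ range N, thinCoeff β l m * thinCoeff α m k = thinCoeff (α * β) l k := by
  rw [← sum_subset (range_subset_range.2 hl) fun m _ hm => by
    rw [thinCoeff_of_lt β (by simpa using hm), zero_mul]]
  rcases lt_or_ge l k with hlk | hkl
  · rw [thinCoeff_of_lt _ hlk]
    exact sum_eq_zero fun m hm => by
      rw [thinCoeff_of_lt α (by simp at hm; omega), mul_zero]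
  obtain ⟨d, rfl⟩ := Nat.exists_eq_add_of_le hkl
  rw [Nat.succ_eq_add_one, add_assoc, sum_range_add, sum_eq_zero fun m hm => by
    rw [thinCoeff_of_lt α (mem_range.1 hm), mul_zero], zero_add]
  have hsplit : 1 - α * β = β * (1 - α) + (1 - β) := by ring
  rw [thinCoeff, hsplit, Nat.add_sub_cancel_left, add_pow, mul_sum]
  refine sum_congr rfl fun t _ => ?_
  have hchoose := Nat.choose_mul (n := k + d) (k := k + t) (s := k) (Nat.le_add_right k t)
  simp only [Nat.add_sub_cancel_left] at hchoose
  have hd : k + d - (k + t) = d - t := by omega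
  simp only [thinCoeff, Nat.add_sub_cancel_left, hd, mul_pow]
  have hchooseR :
      ((k + d).choose (k + t) : ℝ) * (k + t).choose k = (k + d).choose k * d.choose t := by
    exact_mod_cast hchoose
  linear_combination (β ^ (k + t) * (1 - β) ^ (d - t) * α ^ k * (1 - α) ^ t) * hchooseR

lemma thinCoeff_inv (hα : α ≠ 0) (k j : ℕ) :
    thinCoeff α⁻¹ k j = (k.choose j : ℝ) * α ^ (-(k : ℤ)) * (α - 1) ^ (k - j) := by
  rcases lt_or_ge k j with hkj | hjk
  · simp [thinCoeff_of_lt _ hkj, Nat.choose_eq_zero_of_lt hkj]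
  obtain ⟨d, rfl⟩ := Nat.exists_eq_add_of_le hjk
  have h : 1 - α⁻¹ = α⁻¹ * (α - 1) := by field_simp
  simp only [thinCoeff, h, mul_pow, zpow_neg, zpow_natCast, pow_add, Nat.add_sub_cancel_left,
    inv_pow]
  ring

end thinCoeff

lemma thinCoeff_nonneg {α : ℝ} (h0 : 0 ≤ α) (h1 : α ≤ 1) (m k : ℕ) : 0 ≤ thinCoeff α m k := by
  unfold thinCoeff
  have : 0 ≤ 1 - α := by linarith
  positivity

lemma thinCoeff_le_one {α : ℝ} (h0 : 0 ≤ α) (h1 : α ≤ 1) (m k : ℕ) : thinCoeff α m k ≤ 1 := by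
  rcases lt_or_ge m k with hmk | hkm
  · rw [thinCoeff_of_lt _ hmk]; exact zero_le_one
  rw [← sum_range_thinCoeff α (Nat.lt_succ_self m)]
  exact single_le_sum (fun i _ => thinCoeff_nonneg h0 h1 m i) (mem_range.2 (Nat.lt_succ_of_le hkm))

section thinUpTo

variable {n : ℕ} {α β : ℝ} {q : ℕ → ℝ}

lemma thinUpTo_of_lt {k : ℕ} (h : n < k) : thinUpTo n α q k = 0 :=
  sum_eq_zero fun m hm => by rw [thinCoeff_of_lt α (by simp at hm; omega), zero_mul]

lemma thinUpTo_self : thinUpTo n α q n = α ^ n * q n := by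
  rw [thinUpTo, sum_eq_single_of_mem n (self_mem_range_succ n) fun m hm hmn =>
    by rw [thinCoeff_of_lt α (lt_of_le_of_ne (by simpa [Nat.lt_succ_iff] using hm) hmn), zero_mul],
    thinCoeff_self]

lemma thinUpTo_thinUpTo (k : ℕ) : thinUpTo n α (thinUpTo n β q) k = thinUpTo n (α * β) q k := by
  simp only [thinUpTo, mul_sum, ← mul_assoc]
  rw [sum_comm]
  refine sum_congr rfl fun l hl => ?_
  rw [← sum_mul, ← sum_thinCoeff_mul_thinCoeff α β (mem_range.1 hl) k]
  simp only [mul_comm]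

lemma thinUpTo_one {k : ℕ} (hk : k ≤ n) : thinUpTo n 1 q k = q k := by
  simp [thinUpTo, thinCoeff_one, Nat.lt_succ_of_le hk]

lemma thinUpTo_inv_thinUpTo (hα : α ≠ 0) {k : ℕ} (hk : k ≤ n) :
    thinUpTo n α⁻¹ (thinUpTo n α q) k = q k := by
  rw [thinUpTo_thinUpTo, inv_mul_cancel₀ hα, thinUpTo_one hk]

lemma thinUpTo_thinUpTo_inv (hα : α ≠ 0) {k : ℕ} (hk : k ≤ n) :
    thinUpTo n α (thinUpTo n α⁻¹ q) k = q k := by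
  rw [thinUpTo_thinUpTo, mul_inv_cancel₀ hα, thinUpTo_one hk]

lemma sum_range_thinUpTo : ∑ k ∈ range (n + 1), thinUpTo n α q k = ∑ m ∈ range (n + 1), q m := by
  simp only [thinUpTo]
  rw [sum_comm]
  exact sum_congr rfl fun m hm => by rw [← sum_mul, sum_range_thinCoeff α (mem_range.1 hm), one_mul]

lemma hasSum_thinUpTo {s : ℝ} (hq : ∀ k, n < k → q k = 0) (h : HasSum q s) :
    HasSum (thinUpTo n α q) s := by
  have hsupp {f : ℕ → ℝ} (hf : ∀ k, n < k → f k = 0) : HasSum f (∑ k ∈ range (n + 1), f k) :=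
    hasSum_sum_of_ne_finset_zero fun k hk => hf k (by simpa [Nat.lt_succ_iff] using hk)
  rw [h.unique (hsupp hq), ← sum_range_thinUpTo]
  exact hsupp fun k hk => thinUpTo_of_lt hk

end thinUpTo

section thin

variable {n : ℕ} {α : ℝ} {p q : ℕ → ℝ}

lemma thin_eq_thinUpTo (hq : ∀ k, n < k → q k = 0) (k : ℕ) : thin α q k = thinUpTo n α q k :=
  tsum_eq_sum fun m hm => by rw [hq m (by simpa [Nat.lt_succ_iff] using hm), mul_zero]

lemma thin_one_s16 (q : ℕ → ℝ) (k : ℕ) : thin 1 q k = q k := by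
  change ∑' m, thinCoeff 1 m k * q m = q k
  simp [thinCoeff_one]

lemma thin_zero {k : ℕ} (hk : k ≠ 0) (q : ℕ → ℝ) : thin 0 q k = 0 := by
  simp [thin, zero_pow hk]

lemma thinCoeff_mul_le_thin (h0 : 0 ≤ α) (h1 : α ≤ 1) (hq : IsPMF q) (m k : ℕ) :
    thinCoeff α m k * q m ≤ thin α q k :=
  (hq.2.summable.of_nonneg_of_le (fun i => mul_nonneg (thinCoeff_nonneg h0 h1 i k) (hq.1 i))
    fun i => mul_le_of_le_one_left (hq.1 i) (thinCoeff_le_one h0 h1 i k)).le_tsum m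
    fun i _ => mul_nonneg (thinCoeff_nonneg h0 h1 i k) (hq.1 i)

lemma sum_Icc_eq_thinUpTo_inv (hα : α ≠ 0) (p : ℕ → ℝ) (j : ℕ) :
    ∑ k ∈ Icc j n, (k.choose j : ℝ) * α ^ (-(k : ℤ)) * (α - 1) ^ (k - j) * p k
      = thinUpTo n α⁻¹ p j := by
  simp only [← thinCoeff_inv α hα]
  exact sum_subset (fun k hk => by simp at hk ⊢; omega)
    fun k hkn hk => by rw [thinCoeff_of_lt _ (by simp at hkn hk; omega), zero_mul]

lemma thin_thinUpTo_inv (hα : α ≠ 0) (hp : ∀ k, n < k → p k = 0) (k : ℕ) :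
    thin α (thinUpTo n α⁻¹ p) k = p k := by
  rw [thin_eq_thinUpTo fun _ => thinUpTo_of_lt]
  rcases le_or_gt k n with hk | hk
  · exact thinUpTo_thinUpTo_inv hα hk
  · rw [hp k hk, thinUpTo_of_lt hk]

lemma eq_thinUpTo_inv_of_eq_thin (hα : α ≠ 0) (hq : ∀ k, n < k → q k = 0)
    (hpq : ∀ k, p k = thin α q k) {j : ℕ} (hj : j ≤ n) : q j = thinUpTo n α⁻¹ p j := by
  rw [← thinUpTo_inv_thinUpTo hα hj (q := q)]
  congr 1
  funext k
  rw [hpq, thin_eq_thinUpTo hq]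

end thin

section rho

variable {n : ℕ} {α : ℝ} {p q : ℕ → ℝ}

lemma eq_zero_of_thin_eq_zero (h0 : 0 < α) (h1 : α ≤ 1) (hq : IsPMF q) {m : ℕ}
    (h : thin α q m = 0) : q m = 0 := by
  have hle := thinCoeff_mul_le_thin h0.le h1 hq m m
  rw [thinCoeff_self, h] at hle
  exact le_antisymm (nonpos_of_mul_nonpos_right hle (pow_pos h0 m)) (hq.1 m)

lemma le_pow_of_eq_thin (hn : n ≠ 0) (hp : ∀ k, n < k → p k = 0) (h0 : 0 ≤ α) (h1 : α ≤ 1)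
    (hq : IsPMF q) (hpq : ∀ k, p k = thin α q k) : p n ≤ α ^ n := by
  rcases h0.eq_or_lt with rfl | hpos
  · rw [hpq, thin_zero hn, zero_pow hn]
  have hq0 (k : ℕ) (hk : n < k) : q k = 0 :=
    eq_zero_of_thin_eq_zero hpos h1 hq ((hpq k).symm.trans (hp k hk))
  rw [hpq, thin_eq_thinUpTo hq0, thinUpTo_self]
  exact mul_le_of_le_one_right (pow_nonneg h0 n) (le_hasSum hq.2 n fun i _ => hq.1 i)

lemma rpow_one_div_le_rho (hn : n ≠ 0) (hp : IsPMF p) (hsupp : ∀ k, n < k → p k = 0) :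
    p n ^ ((1 : ℝ) / n) ≤ rho p := by
  refine le_csInf ⟨1, ⟨zero_le_one, le_rfl⟩, p, hp, fun k => (thin_one_s16 p k).symm⟩ ?_
  rintro α ⟨⟨h0, h1⟩, q, hq, hpq⟩
  calc p n ^ ((1 : ℝ) / n) ≤ (α ^ n) ^ ((1 : ℝ) / n) :=
        Real.rpow_le_rpow (hp.1 n) (le_pow_of_eq_thin hn hsupp h0 h1 hq hpq) (by positivity)
    _ = α := by rw [one_div, Real.pow_rpow_inv_natCast h0 hn]

end rho

/-- for `X` supported on `{0,…,n}` with `p_n > 0`: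
`ρ(X) ≥ p_n^{1/n} > 0`, and for `α ∈ (0,1]`, `X ∼ α∘Z` with `Z` supported on
`{0,…,n}` iff `p_j*(α) ≥ 0` for all `j ≤ n−1`; in that case `P(Z=j) = p_j*(α)`. -/
theorem stmt_16 (n : ℕ) (hn : 1 ≤ n) (p : ℕ → ℝ) (hp : IsPMF p)
    (hsupp : ∀ k, n < k → p k = 0) (hpn : 0 < p n) :
    (0 < p n ^ ((1 : ℝ) / n) ∧ p n ^ ((1 : ℝ) / n) ≤ rho p) ∧
    ∀ α ∈ Set.Ioc (0:ℝ) 1,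
      ((∃ q : ℕ → ℝ, IsPMF q ∧ (∀ k, n < k → q k = 0) ∧ ∀ k, p k = thin α q k) ↔
          ∀ j ≤ n - 1,
            0 ≤ ∑ k ∈ Finset.Icc j n,
              (k.choose j : ℝ) * α ^ (-(k : ℤ)) * (α - 1) ^ (k - j) * p k) ∧
      (∀ q : ℕ → ℝ, IsPMF q → (∀ k, n < k → q k = 0) → (∀ k, p k = thin α q k) →
        ∀ j ≤ n, q j = ∑ k ∈ Finset.Icc j n,
          (k.choose j : ℝ) * α ^ (-(k : ℤ)) * (α - 1) ^ (k - j) * p k) := by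
  refine ⟨⟨Real.rpow_pos_of_pos hpn _, rpow_one_div_le_rho (by omega) hp hsupp⟩, ?_⟩
  rintro α ⟨hα0, -⟩
  have hα : α ≠ 0 := hα0.ne'
  simp only [sum_Icc_eq_thinUpTo_inv hα]
  refine ⟨⟨fun ⟨q, hq, hq0, hpq⟩ j hj => ?_, fun hnonneg => ?_⟩,
    fun q _ hq0 hpq j hj => eq_thinUpTo_inv_of_eq_thin hα hq0 hpq hj⟩
  · rw [← eq_thinUpTo_inv_of_eq_thin hα hq0 hpq (by omega)]
    exact hq.1 j
  refine ⟨thinUpTo n α⁻¹ p, ⟨fun j => ?_, hasSum_thinUpTo hsupp hp.2⟩,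
    fun k => thinUpTo_of_lt, fun k => (thin_thinUpTo_inv hα hsupp k).symm⟩
  rcases lt_trichotomy j n with hj | rfl | hj
  · exact hnonneg j (by omega)
  · rw [thinUpTo_self]
    exact mul_nonneg (pow_nonneg (inv_nonneg.2 hα0.le) _) hpn.le
  · rw [thinUpTo_of_lt hj]
end
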